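/- If (A, B, C) ∈ U, then B = Cl⁻(C); that is, B consists exactly of the companions of elements of C. -/

import Mathlib

open Classical Set

noncomputable section

/-- γ(n) = 3n+1 if n ≡ 0 or 2 (mod 3), else n. -/
def gam (n : ℕ) : ℕ := if n % 3 = 0 ∨ n % 3 = 2 then 3 * n + 1 else n

/-- R(x,y) ⟺ x = γ(y) ∨ y = γ(x). -/
def Rrel (x y : ℕ) : Prop := x = gam y ∨ y = gam x

/-- X closed under R. -/
def RClosed (X : Set ℕ) : Prop := ∀ x ∈ X, ∀ y, Rrel x y → y ∈ X

/-- Cl(X): the least R-closed superset of X. -/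
def Cl (X : Set ℕ) : Set ℕ := ⋂₀ {Y | X ⊆ Y ∧ RClosed Y}

/-- Cl⁻(X) = Cl(X) \ X. -/
def Clm (X : Set ℕ) : Set ℕ := Cl X \ X

/-- The companion ñ: the element ≠ n of Cl({n}) if one exists, else n. -/
def companion (n : ℕ) : ℕ :=
  if h : ∃ y, y ≠ n ∧ y ∈ Cl {n} then h.choose else n

def N0 : Set ℕ := {n | gam n = n}

def T0 : Set ℕ := {n | n % 3 = 0}
def T1 : Set ℕ := {n | n % 3 = 1}
def T2 : Set ℕ := {n | n % 3 = 2}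
def T02 : Set ℕ := T0 ∪ T2

def v1 : Set ℕ := (Cl T2)ᶜ
def v2 : Set ℕ := Clm T2
def v3 : Set ℕ := T2

/-- (A,B,C) is a partition of ℕ into three pairwise disjoint sets. -/
def IsPartition3 (A B C : Set ℕ) : Prop :=
  A ∪ B ∪ C = Set.univ ∧ Disjoint A B ∧ Disjoint A C ∧ Disjoint B C

/-- Membership in U: partition with v ⊴ (A,B,C), A closed, B ⊆ v₂. -/
def memU (A B C : Set ℕ) : Prop :=
  IsPartition3 A B C ∧ v1 ⊆ A ∧ C ⊆ v3 ∧ RClosed A ∧ B ⊆ v2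

/-!
For `n ≡ 2 (mod 3)` the pair `{n, 3n+1}` is an `R`-component, so the closure of a set
`C ⊆ 3ℕ+2` is `C ∪ (3C+1)` and `Cl⁻(C) = 3C+1`. In a member `(A, B, C)` of `U`, the closed set
`A` contains `n` iff it contains `3n+1`. So for `n ≡ 2` either both lie in `A`, or `n ∈ C` and
`3n+1 ∈ B` (`n ∈ B` is impossible since `B ⊆ Cl⁻(3ℕ+2)` avoids `3ℕ+2`), giving `B = 3C+1`.
-/

lemma gam_of_mod_three_eq_two {n : ℕ} (hn : n % 3 = 2) : gam n = 3 * n + 1 :=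
  if_pos (Or.inr hn)

lemma subset_Cl (X : Set ℕ) : X ⊆ Cl X := fun _ hx _ hY => hY.1 hx

lemma rClosed_Cl (X : Set ℕ) : RClosed (Cl X) :=
  fun x hx y hxy Y hY => hY.2 x (hx Y hY) y hxy

lemma Cl_subset {X Y : Set ℕ} (hXY : X ⊆ Y) (hY : RClosed Y) : Cl X ⊆ Y :=
  fun _ hx => hx Y ⟨hXY, hY⟩

lemma RClosed.gam_mem_iff {A : Set ℕ} (hA : RClosed A) (n : ℕ) : gam n ∈ A ↔ n ∈ A :=
  ⟨fun h => hA _ h n (Or.inl rfl), fun h => hA n h _ (Or.inr rfl)⟩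

lemma rClosed_biUnion {ι : Type*} {s : Set ι} {X : ι → Set ℕ} (hX : ∀ i ∈ s, RClosed (X i)) :
    RClosed (⋃ i ∈ s, X i) := by
  intro x hx y hxy
  simp only [mem_iUnion] at hx ⊢
  obtain ⟨i, hi, hxi⟩ := hx
  exact ⟨i, hi, hX i hi x hxi y hxy⟩

lemma rClosed_pair {n : ℕ} (hn : n % 3 = 2) : RClosed {n, 3 * n + 1} := by
  intro x hx y hxy
  simp only [mem_insert_iff, mem_singleton_iff] at hx ⊢
  unfold Rrel gam at hxy
  split_ifs at hxy <;> omega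

lemma Cl_eq_biUnion_pair {C : Set ℕ} (hC : C ⊆ T2) : Cl C = ⋃ n ∈ C, {n, 3 * n + 1} := by
  apply (Cl_subset _ (rClosed_biUnion fun n hn => rClosed_pair (hC hn))).antisymm
  · refine iUnion₂_subset fun n hn => insert_subset (subset_Cl C hn) ?_
    rw [singleton_subset_iff, ← gam_of_mod_three_eq_two (hC hn), (rClosed_Cl C).gam_mem_iff]
    exact subset_Cl C hn
  · exact fun n hn => mem_biUnion hn (mem_insert n _)

lemma Clm_eq_image {C : Set ℕ} (hC : C ⊆ T2) : Clm C = (fun n => 3 * n + 1) '' C := by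
  ext x
  simp only [Clm, Cl_eq_biUnion_pair hC, mem_sdiff, mem_iUnion, mem_insert_iff,
    mem_singleton_iff, mem_image, exists_prop]
  constructor
  · rintro ⟨⟨n, hn, rfl | rfl⟩, hx⟩
    · exact absurd hn hx
    · exact ⟨n, hn, rfl⟩
  · rintro ⟨n, hn, rfl⟩
    refine ⟨⟨n, hn, Or.inr rfl⟩, fun h => ?_⟩
    have h2 : (3 * n + 1) % 3 = 2 := hC h
    omega

namespace IsPartition3

variable {A B C : Set ℕ} {x : ℕ}

lemma mem_second (h : IsPartition3 A B C) (hA : x ∉ A) (hC : x ∉ C) : x ∈ B := by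
  have hx : x ∈ A ∪ B ∪ C := h.1 ▸ mem_univ x
  simp only [mem_union] at hx
  tauto

lemma mem_third (h : IsPartition3 A B C) (hA : x ∉ A) (hB : x ∉ B) : x ∈ C := by
  have hx : x ∈ A ∪ B ∪ C := h.1 ▸ mem_univ x
  simp only [mem_union] at hx
  tauto

end IsPartition3

theorem second_eq_clm_third (A B C : Set ℕ) (h : memU A B C) : B = Clm C := by
  obtain ⟨hpart, -, hC, hA, hB⟩ := h
  have hBimage : B ⊆ (fun n => 3 * n + 1) '' T2 := Clm_eq_image subset_rfl ▸ hB
  have mem_A_iff {n : ℕ} (hn : n ∈ T2) : 3 * n + 1 ∈ A ↔ n ∈ A := by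
    rw [← gam_of_mod_three_eq_two hn, hA.gam_mem_iff]
  rw [Clm_eq_image hC]
  refine subset_antisymm ?_ ?_
  · intro x hx
    obtain ⟨n, hn, rfl⟩ := hBimage hx
    refine ⟨n, hpart.mem_third (fun hnA => ?_) (fun hnB => (hB hnB).2 hn), rfl⟩
    exact hpart.2.1.ne_of_mem ((mem_A_iff hn).2 hnA) hx rfl
  · rintro _ ⟨n, hn, rfl⟩
    refine hpart.mem_second (fun hA => ?_) (fun hC' => ?_)
    · exact hpart.2.2.1.ne_of_mem ((mem_A_iff (hC hn)).1 hA) hn rfl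
    · have h2 : (3 * n + 1) % 3 = 2 := hC hC'
      omega
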